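/- arXiv:1908.03037 — 9 statements merged into one kernel-verified Lean document; each statement's English description precedes it below -/
import Mathlib

section
/- Let γ be a rectifiable curve in the complex plane of positive length ℓ(γ), and let s be a real number with 0 < s < ℓ(γ). Then the Lebesgue measure of the set {z ∈ ℂ : dist(z, γ) ≤ s} is at most (9π/2)·s·ℓ(γ). -/
open MeasureTheory Set Real

set_option maxHeartbeats 1000000 in
/-- A rectifiable curve of positive length ℓ(γ); the s-neighbourhood of its image
has Lebesgue measure at most (9π/2)·s·ℓ(γ). -/
theorem stmt_0 (γ : ℝ → ℂ) (hcont : ContinuousOn γ (Set.Icc 0 1))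
    (hfin : eVariationOn γ (Set.Icc 0 1) ≠ ⊤)
    (ℓ : ℝ) (hℓ : ℓ = (eVariationOn γ (Set.Icc 0 1)).toReal)
    (hpos : 0 < ℓ) (s : ℝ) (hs : 0 < s) (hsl : s < ℓ) :
    volume {z : ℂ | Metric.infDist z (γ '' Set.Icc 0 1) ≤ s}
      ≤ ENNReal.ofReal (9 * π / 2 * s * ℓ) := by
  set S : Set ℝ := Set.Icc 0 1 with hS
  have h01 : (0:ℝ) ∈ S := ⟨le_refl 0, zero_le_one⟩
  have h1 : (1:ℝ) ∈ S := ⟨zero_le_one, le_refl 1⟩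
  have hBV : LocallyBoundedVariationOn γ S := fun a b _ _ =>
    ne_top_of_le_ne_top hfin (eVariationOn.mono γ Set.inter_subset_left)
  set v : ℝ → ℝ := variationOnFromTo γ S 0 with hv
  have hvmono : MonotoneOn v S := variationOnFromTo.monotoneOn hBV h01
  have hv0 : v 0 = 0 := variationOnFromTo.self γ S 0
  have hv1 : v 1 = ℓ := by
    rw [hv, variationOnFromTo.eq_of_le γ S zero_le_one, hℓ, Set.inter_self]
  have hdist : ∀ x ∈ S, ∀ y ∈ S, x ≤ y → dist (γ x) (γ y) ≤ v y - v x := by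
    intro x hx y hy hxy
    have h1' : dist (γ x) (γ y) ≤ variationOnFromTo γ S x y := by
      rw [variationOnFromTo.eq_of_le γ S hxy, dist_edist]
      exact ENNReal.toReal_mono (hBV x y hx hy)
        (eVariationOn.edist_le γ ⟨hx, le_rfl, hxy⟩ ⟨hy, hxy, le_rfl⟩)
    have h2' := variationOnFromTo.add hBV h01 hx hy
    simp only [hv] at *
    linarith
  have hvnonneg : ∀ t ∈ S, 0 ≤ v t := fun t ht =>
    variationOnFromTo.nonneg_of_le γ S ht.1
  have hvle : ∀ t ∈ S, v t ≤ ℓ := fun t ht => hv1 ▸ hvmono ht h1 ht.2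
  set N : ℕ := ⌈ℓ / s⌉₊ with hNdef
  have hNpos : 0 < N := Nat.ceil_pos.mpr (div_pos hpos hs)
  have hNR : (0:ℝ) < N := Nat.cast_pos.mpr hNpos
  set δ : ℝ := ℓ / (2 * N) with hδdef
  have hδpos : 0 < δ := div_pos hpos (by positivity)
  have hℓeq : ℓ = 2 * N * δ := by
    rw [hδdef]; field_simp
  have hδle : δ ≤ s / 2 := by
    have hle : ℓ / s ≤ N := Nat.le_ceil _
    have h2 : ℓ ≤ N * s := (div_le_iff₀ hs).mp hle
    rw [hδdef, div_le_div_iff₀ (by positivity) (by norm_num)]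
    nlinarith
  have hLne : ∀ k : ℕ, {t | t ∈ S ∧ v t ≤ (2 * k + 1) * δ}.Nonempty := fun k =>
    ⟨0, h01, by rw [hv0]; positivity⟩
  have hLbdd : ∀ k : ℕ, BddAbove {t | t ∈ S ∧ v t ≤ (2 * k + 1) * δ} :=
    fun k => ⟨1, fun t ht => ht.1.2⟩
  set τ : ℕ → ℝ := fun k => sSup {t | t ∈ S ∧ v t ≤ (2 * k + 1) * δ} with hτdef
  have hτmem : ∀ k, τ k ∈ S := fun k =>
    ⟨le_csSup (hLbdd k) ⟨h01, by rw [hv0]; positivity⟩,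
     csSup_le (hLne k) fun t ht => ht.1.2⟩
  -- key covering claim
  have key : ∀ k : ℕ, ∀ t ∈ S, 2 * k * δ ≤ v t → v t ≤ (2 * k + 2) * δ →
      dist (γ t) (γ (τ k)) ≤ δ := by
    intro k t htS hlow hhigh
    refine le_of_forall_pos_le_add ?_
    intro ε hε
    have hcw : ContinuousWithinAt γ S (τ k) := hcont (τ k) (hτmem k)
    rw [Metric.continuousWithinAt_iff] at hcw
    obtain ⟨η, hη, hcw⟩ := hcw ε hε
    by_cases hcase : v t ≤ (2 * k + 1) * δ
    · -- t is in the lower half set L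
      have htL : t ∈ {t | t ∈ S ∧ v t ≤ (2 * k + 1) * δ} := ⟨htS, hcase⟩
      obtain ⟨u, huL, hu⟩ := exists_lt_of_lt_csSup (hLne k)
        (show τ k - η < τ k by linarith)
      set w := max t u with hwdef
      have hwL : w ∈ {t | t ∈ S ∧ v t ≤ (2 * k + 1) * δ} := by
        rcases le_total t u with h | h
        · rw [hwdef, max_eq_right h]; exact huL
        · rw [hwdef, max_eq_left h]; exact htL
      have hwτ : w ≤ τ k := le_csSup (hLbdd k) hwL
      have hwgt : τ k - η < w := lt_of_lt_of_le hu (le_max_right t u)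
      have hdw : dist w (τ k) < η := by
        rw [Real.dist_eq, abs_lt]; constructor <;> linarith
      have hγw : dist (γ w) (γ (τ k)) < ε := hcw hwL.1 hdw
      have h2 : dist (γ t) (γ w) ≤ v w - v t :=
        hdist t htS w hwL.1 (le_max_left t u)
      have h3 := dist_triangle (γ t) (γ w) (γ (τ k))
      have h4 : v w ≤ (2 * k + 1) * δ := hwL.2
      linarith
    · push_neg at hcase
      have hτt : τ k ≤ t := csSup_le (hLne k) fun u hu =>
        le_of_not_gt fun h => absurd ((hvmono htS hu.1 h.le).trans hu.2) (not_le.mpr hcase)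
      rcases eq_or_lt_of_le hτt with heq | hlt
      · rw [← heq, dist_self]; linarith
      · set w := min t (τ k + η / 2) with hwdef
        have hwgt : τ k < w := lt_min hlt (by linarith)
        have hwt : w ≤ t := min_le_left _ _
        have hwS : w ∈ S := ⟨le_trans (hτmem k).1 hwgt.le, le_trans hwt htS.2⟩
        have hwnot : ¬ v w ≤ (2 * k + 1) * δ := fun h =>
          absurd (le_csSup (hLbdd k) ⟨hwS, h⟩) (not_le.mpr hwgt)
        push_neg at hwnot
        have h2 : dist (γ w) (γ t) ≤ v t - v w := hdist w hwS t htS hwt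
        have hdw : dist w (τ k) < η := by
          have : w ≤ τ k + η / 2 := min_le_right _ _
          rw [Real.dist_eq, abs_lt]; constructor <;> linarith
        have hγw : dist (γ w) (γ (τ k)) < ε := hcw hwS hdw
        have h3 := dist_triangle (γ t) (γ w) (γ (τ k))
        rw [dist_comm (γ w) (γ t)] at h2
        linarith
  -- every point of the curve is within δ of some center
  have hcover : ∀ t ∈ S, ∃ k, k < N ∧ dist (γ t) (γ (τ k)) ≤ δ := by
    intro t htS
    set k : ℕ := min ⌊v t / (2 * δ)⌋₊ (N - 1) with hkdef
    have hkN : k < N := lt_of_le_of_lt (min_le_right _ _) (Nat.sub_lt hNpos one_pos)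
    refine ⟨k, hkN, key k t htS ?_ ?_⟩
    · have hkle : (k : ℝ) ≤ ⌊v t / (2 * δ)⌋₊ :=
        Nat.cast_le.mpr (min_le_left _ _)
      have hfl : (⌊v t / (2 * δ)⌋₊ : ℝ) ≤ v t / (2 * δ) :=
        Nat.floor_le (div_nonneg (hvnonneg t htS) (by positivity))
      have : (k : ℝ) ≤ v t / (2 * δ) := hkle.trans hfl
      calc 2 * (k : ℝ) * δ ≤ 2 * (v t / (2 * δ)) * δ := by nlinarith
        _ = v t := by field_simp
    · by_cases h : ⌊v t / (2 * δ)⌋₊ ≤ N - 1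
      · have hkeq : k = ⌊v t / (2 * δ)⌋₊ := min_eq_left h
        have hfl : v t / (2 * δ) < ⌊v t / (2 * δ)⌋₊ + 1 := Nat.lt_floor_add_one _
        have h2 : v t < 2 * δ * ((k : ℝ) + 1) := by
          rw [hkeq]
          calc v t = (v t / (2 * δ)) * (2 * δ) := by field_simp
            _ < ((⌊v t / (2 * δ)⌋₊ : ℝ) + 1) * (2 * δ) := by nlinarith
            _ = 2 * δ * ((⌊v t / (2 * δ)⌋₊ : ℝ) + 1) := by ring
        nlinarith
      · have hkeq : k = N - 1 := min_eq_right (le_of_not_ge h)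
        have hcast : (k : ℝ) = (N : ℝ) - 1 := by
          rw [hkeq, Nat.cast_sub hNpos]; norm_num
        have := hvle t htS
        rw [hcast]
        nlinarith [hℓeq]
  -- the s-neighbourhood is contained in a union of N balls of radius s + δ
  have himg : IsCompact (γ '' S) := isCompact_Icc.image_of_continuousOn hcont
  have himgne : (γ '' S).Nonempty := ⟨γ 0, Set.mem_image_of_mem γ h01⟩
  have hsubset : {z : ℂ | Metric.infDist z (γ '' S) ≤ s} ⊆
      ⋃ k ∈ Finset.range N, Metric.closedBall (γ (τ k)) (s + δ) := by
    intro z hz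
    obtain ⟨y, hy, hyd⟩ := himg.exists_infDist_eq_dist himgne z
    obtain ⟨t, htS, rfl⟩ := hy
    obtain ⟨k, hkN, hk⟩ := hcover t htS
    refine Set.mem_iUnion₂.mpr ⟨k, Finset.mem_range.mpr hkN, ?_⟩
    rw [Metric.mem_closedBall]
    have hz' : dist z (γ t) ≤ s := by rw [← hyd]; exact hz
    calc dist z (γ (τ k)) ≤ dist z (γ t) + dist (γ t) (γ (τ k)) := dist_triangle _ _ _
      _ ≤ s + δ := add_le_add hz' hk
  -- volume computation
  have hrpos : (0:ℝ) ≤ s + δ := by linarith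
  calc volume {z : ℂ | Metric.infDist z (γ '' S) ≤ s}
      ≤ volume (⋃ k ∈ Finset.range N, Metric.closedBall (γ (τ k)) (s + δ)) :=
        measure_mono hsubset
    _ ≤ ∑ k ∈ Finset.range N, volume (Metric.closedBall (γ (τ k)) (s + δ)) :=
        measure_biUnion_finset_le _ _
    _ = N * (ENNReal.ofReal (s + δ) ^ 2 * NNReal.pi) := by
        simp [Complex.volume_closedBall, Finset.sum_const]
    _ = ENNReal.ofReal ((N : ℝ) * ((s + δ) ^ 2 * π)) := by
        rw [ENNReal.ofReal_mul (by positivity), ENNReal.ofReal_mul (by positivity),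
          ENNReal.ofReal_pow hrpos, ENNReal.ofReal_natCast]
        congr 1
        rw [← NNReal.coe_real_pi, ENNReal.ofReal_coe_nnreal]
    _ ≤ ENNReal.ofReal (9 * π / 2 * s * ℓ) := by
        apply ENNReal.ofReal_le_ofReal
        have hceil : (N : ℝ) < ℓ / s + 1 := Nat.ceil_lt_add_one (by positivity)
        have hNs : (N : ℝ) * s ≤ ℓ + s := by
          have h2 := mul_le_mul_of_nonneg_right hceil.le hs.le
          rw [add_mul, div_mul_cancel₀ _ hs.ne', one_mul] at h2
          linarith
        have hsq : (s + δ) ^ 2 ≤ (3 * s / 2) ^ 2 := by nlinarith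
        have hpi := Real.pi_pos
        calc (N : ℝ) * ((s + δ) ^ 2 * π) ≤ (N : ℝ) * ((3 * s / 2) ^ 2 * π) := by
              apply mul_le_mul_of_nonneg_left _ hNR.le
              exact mul_le_mul_of_nonneg_right hsq hpi.le
          _ = π * (9 / 4) * ((N : ℝ) * s) * s := by ring
          _ ≤ π * (9 / 4) * (ℓ + s) * s := by
              have h3 : (0:ℝ) ≤ π * (9 / 4) := by positivity
              nlinarith [mul_le_mul_of_nonneg_left hNs h3]
          _ ≤ 9 * π / 2 * s * ℓ := by
              nlinarith [mul_pos hpi (mul_pos hs (sub_pos.mpr hsl))]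
end

section
/- Let D ⊂ ℂ be a convex open set and h : D → ℂ holomorphic. If Re(h'(z)) > 0 for all z ∈ D, then h is injective on D. -/
/-!
Along the segment from `x` to `y`, the real function `t ↦ Re (conj (y - x) * h (x + t (y - x)))`
has derivative `‖y - x‖² Re h'`, which is positive; by the mean value theorem its values at `0`
and `1` differ, so `h x ≠ h y`.
-/

open AffineMap ComplexConjugate Set

theorem re_conj_sub_mul_sub_pos_of_hasDerivAt {f f' : ℂ → ℂ} {x y : ℂ} (hxy : x ≠ y)
    (hf : ∀ z ∈ segment ℝ x y, HasDerivAt f (f' z) z)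
    (hre : ∀ z ∈ segment ℝ x y, 0 < (f' z).re) :
    0 < (conj (y - x) * (f y - f x)).re := by
  set φ : ℝ → ℝ := fun t ↦ (conj (y - x) * f (lineMap x y t)).re
  have hφ : ∀ t ∈ Icc (0 : ℝ) 1,
      HasDerivAt φ (‖y - x‖ ^ 2 * (f' (lineMap x y t)).re) t := by
    intro t ht
    have hcomp := ((hf _ (lineMap_mem_segment ℝ x y ht)).comp t hasDerivAt_lineMap).const_mul
      (conj (y - x))
    refine (Complex.reCLM.hasFDerivAt.comp_hasDerivAt t hcomp).congr_deriv ?_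
    rw [Complex.reCLM_apply, mul_comm (f' _), ← mul_assoc, Complex.conj_mul', ← Complex.ofReal_pow,
      Complex.re_ofReal_mul]
  obtain ⟨c, hc, hslope⟩ := exists_hasDerivAt_eq_slope φ _ zero_lt_one
    (fun t ht ↦ (hφ t ht).continuousAt.continuousWithinAt) (fun t ht ↦ hφ t (Ioo_subset_Icc_self ht))
  have hends : φ 1 - φ 0 = (conj (y - x) * (f y - f x)).re := by simp [φ, mul_sub]
  rw [sub_zero, div_one] at hslope
  rw [← hends, ← hslope]
  exact mul_pos (pow_pos (norm_pos_iff.2 (sub_ne_zero.2 hxy.symm)) 2)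
    (hre _ (lineMap_mem_segment ℝ x y (Ioo_subset_Icc_self hc)))

theorem stmt_1_general (D : Set ℂ) (hD : Convex ℝ D)
    (h h' : ℂ → ℂ) (hderiv : ∀ z ∈ D, HasDerivAt h (h' z) z)
    (hre : ∀ z ∈ D, 0 < (h' z).re) :
    Set.InjOn h D := by
  intro x hx y hy hxy
  by_contra hne
  have hseg := hD.segment_subset hx hy
  have hpos := re_conj_sub_mul_sub_pos_of_hasDerivAt hne (fun z hz ↦ hderiv z (hseg hz))
    (fun z hz ↦ hre z (hseg hz))
  simp [hxy] at hpos

/-- Noshiro–Warschawski: if h is holomorphic on a convex open set D and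
Re h'(z) > 0 on D, then h is injective on D. -/
theorem stmt_1 (D : Set ℂ) (hD : Convex ℝ D) (hopen : IsOpen D)
    (h h' : ℂ → ℂ) (hderiv : ∀ z ∈ D, HasDerivAt h (h' z) z)
    (hre : ∀ z ∈ D, 0 < (h' z).re) :
    Set.InjOn h D :=
  stmt_1_general D hD h h' hderiv hre
end

section
/- Let z₀ ∈ ℂ, r > 0, and let h be holomorphic on the open disk D(z₀, r) with h'(ζ) ≠ 0 for all ζ ∈ D(z₀, r). If |h''(ζ)/h'(ζ)| < 1/r for all ζ ∈ D(z₀, r), then h is injective on D(z₀, r). -/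
/-!
Since `h'` has no zeros on the disk, `h''/h'` has a primitive `g` there, and
`h' = h'(z₀) · exp (g - g(z₀))`. The bound on `h''/h'` and the mean value inequality give
`|g(z) - g(z₀)| < 1 < π/2`, so `h'/h'(z₀)` has positive real part on the disk. A function whose
derivative has positive real part on a convex set is injective there (Noshiro–Warschawski): if
`f a = f b`, the mean value theorem applied to `t ↦ Re (f (a + t (b - a)) / (b - a))` on `[0, 1]`
produces a point of the segment where `Re f' = 0`.
-/

open Set Metric Complex

theorem Complex.re_exp_pos_of_norm_lt {w : ℂ} (hw : ‖w‖ < Real.pi / 2) : 0 < (exp w).re := by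
  rw [exp_re]
  refine mul_pos (Real.exp_pos _) (Real.cos_pos_of_mem_Ioo ⟨?_, ?_⟩) <;>
    linarith [abs_le.mp (abs_im_le_norm w)]

theorem Convex.injOn_of_re_deriv_pos {s : Set ℂ} (hs : Convex ℝ s) {f f' : ℂ → ℂ}
    (hf : ∀ z ∈ s, HasDerivAt f (f' z) z) (hre : ∀ z ∈ s, 0 < (f' z).re) : InjOn f s := by
  intro a ha b hb hab
  by_contra hne
  have hba : b - a ≠ 0 := sub_ne_zero.mpr (Ne.symm hne)
  have hseg : ∀ t ∈ Icc (0 : ℝ) 1, a + t * (b - a) ∈ s := fun t ht => by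
    simpa [real_smul] using hs.add_smul_sub_mem ha hb ht
  have hφ : ∀ t ∈ Icc (0 : ℝ) 1,
      HasDerivAt (fun x : ℝ => (f (a + x * (b - a)) / (b - a)).re) (f' (a + t * (b - a))).re t := by
    intro t ht
    have hline : HasDerivAt (fun w : ℂ => a + w * (b - a)) (b - a) t := by
      simpa using ((hasDerivAt_id (t : ℂ)).mul_const (b - a)).const_add a
    have := ((hf _ (hseg t ht)).comp (t : ℂ) hline).div_const (b - a)
    rw [mul_div_cancel_right₀ _ hba] at this
    exact this.real_of_complex
  obtain ⟨c, hc, hslope⟩ := exists_hasDerivAt_eq_slope _ _ zero_lt_one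
    (fun t ht => (hφ t ht).continuousAt.continuousWithinAt)
    (fun t ht => hφ t (Ioo_subset_Icc_self ht))
  have hzero : (f' (a + c * (b - a))).re = 0 := by simpa [hab] using hslope
  exact (hre _ (hseg c (Ioo_subset_Icc_self hc))).ne' hzero

theorem exists_hasDerivAt_div_of_ball {c : ℂ} {R : ℝ} {f f' : ℂ → ℂ}
    (hf : ∀ z ∈ ball c R, HasDerivAt f (f' z) z) (hf0 : ∀ z ∈ ball c R, f z ≠ 0) :
    ∃ g : ℂ → ℂ, ∀ z ∈ ball c R, HasDerivAt g (f' z / f z) z := by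
  have hfd : DifferentiableOn ℂ f (ball c R) := fun z hz =>
    (hf z hz).differentiableAt.differentiableWithinAt
  have hf'd : DifferentiableOn ℂ f' (ball c R) :=
    (hfd.deriv isOpen_ball).congr fun z hz => (hf z hz).deriv.symm
  exact (hf'd.div hfd hf0).isExactOn_ball

theorem IsOpen.eq_mul_exp_sub_of_hasDerivAt_div {s : Set ℂ} (hs : IsOpen s)
    (hs' : IsPreconnected s) {f f' g : ℂ → ℂ} (hf : ∀ z ∈ s, HasDerivAt f (f' z) z)
    (hf0 : ∀ z ∈ s, f z ≠ 0) (hg : ∀ z ∈ s, HasDerivAt g (f' z / f z) z) {z w : ℂ}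
    (hz : z ∈ s) (hw : w ∈ s) : f z = f w * exp (g z - g w) := by
  have hk : ∀ x ∈ s, HasDerivAt (fun x => f x * exp (-g x)) 0 x := fun x hx => by
    refine ((hf x hx).mul (hg x hx).neg.cexp).congr_deriv ?_
    field_simp [hf0 x hx]
    ring
  have hconst := hs.is_const_of_deriv_eq_zero hs'
    (fun x hx => (hk x hx).differentiableAt.differentiableWithinAt)
    (fun x hx => (hk x hx).deriv) hz hw
  calc f z = f z * exp (-g z) * exp (g z) := by rw [mul_assoc, ← exp_add]; simp
    _ = f w * exp (g z - g w) := by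
      rw [hconst, mul_assoc, ← exp_add]; ring_nf

theorem re_div_pos_of_norm_div_le {c : ℂ} {R M : ℝ} {f f' : ℂ → ℂ}
    (hf : ∀ z ∈ ball c R, HasDerivAt f (f' z) z) (hf0 : ∀ z ∈ ball c R, f z ≠ 0)
    (hM : ∀ z ∈ ball c R, ‖f' z / f z‖ ≤ M) {z w : ℂ} (hz : z ∈ ball c R) (hw : w ∈ ball c R)
    (hzw : M * ‖z - w‖ < Real.pi / 2) : 0 < (f z / f w).re := by
  obtain ⟨g, hg⟩ := exists_hasDerivAt_div_of_ball hf hf0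
  have hgzw : ‖g z - g w‖ ≤ M * ‖z - w‖ :=
    (convex_ball c R).norm_image_sub_le_of_norm_hasDerivWithin_le
      (fun x hx => (hg x hx).hasDerivWithinAt) hM hw hz
  rw [isOpen_ball.eq_mul_exp_sub_of_hasDerivAt_div (convex_ball c R).isPreconnected
    hf hf0 hg hz hw, mul_div_cancel_left₀ _ (hf0 w hw)]
  exact re_exp_pos_of_norm_lt (hgzw.trans_lt hzw)

theorem stmt_2_general (z₀ : ℂ) (r : ℝ) (h h' h'' : ℂ → ℂ)
    (hd1 : ∀ ζ ∈ Metric.ball z₀ r, HasDerivAt h (h' ζ) ζ)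
    (hd2 : ∀ ζ ∈ Metric.ball z₀ r, HasDerivAt h' (h'' ζ) ζ)
    (hne : ∀ ζ ∈ Metric.ball z₀ r, h' ζ ≠ 0)
    (hbound : ∀ ζ ∈ Metric.ball z₀ r, ‖h'' ζ / h' ζ‖ < 1 / r) :
    Set.InjOn h (Metric.ball z₀ r) := by
  intro a ha
  have hr : 0 < r := pos_of_mem_ball ha
  have hz₀ : z₀ ∈ ball z₀ r := mem_ball_self hr
  have hre : ∀ ζ ∈ ball z₀ r, 0 < (h' ζ / h' z₀).re := fun ζ hζ => by
    refine re_div_pos_of_norm_div_le hd2 hne (fun z hz => (hbound z hz).le) hζ hz₀ ?_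
    have hζr : ‖ζ - z₀‖ < r := mem_ball_iff_norm.mp hζ
    calc 1 / r * ‖ζ - z₀‖ < 1 := by rw [one_div_mul_eq_div, div_lt_one hr]; exact hζr
      _ < Real.pi / 2 := by linarith [Real.pi_gt_three]
  have hinj : InjOn ((· / h' z₀) ∘ h) (ball z₀ r) :=
    (convex_ball z₀ r).injOn_of_re_deriv_pos (fun ζ hζ => (hd1 ζ hζ).div_const _) hre
  exact hinj.of_comp ha

/-- Injectivity criterion: if h is holomorphic on D(z₀,r) with non-vanishing
derivative and |h''/h'| < 1/r there, then h is injective on D(z₀,r). -/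
theorem stmt_2 (z₀ : ℂ) (r : ℝ) (hr : 0 < r) (h h' h'' : ℂ → ℂ)
    (hd1 : ∀ ζ ∈ Metric.ball z₀ r, HasDerivAt h (h' ζ) ζ)
    (hd2 : ∀ ζ ∈ Metric.ball z₀ r, HasDerivAt h' (h'' ζ) ζ)
    (hne : ∀ ζ ∈ Metric.ball z₀ r, h' ζ ≠ 0)
    (hbound : ∀ ζ ∈ Metric.ball z₀ r, ‖h'' ζ / h' ζ‖ < 1 / r) :
    Set.InjOn h (Metric.ball z₀ r) :=
  stmt_2_general z₀ r h h' h'' hd1 hd2 hne hbound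
end

section
/- For α > 0 define E_α : [0,∞) → [0,∞) by E_α(x) = exp(x^α). If β > α > 0, then there exists x₀ > 0 such that for all integers k ≥ 4 and all x ≥ x₀, the k-th iterate E_α^k(x) is at least the (k−2)-nd iterate E_β^{k−2}(x). -/
open Real Filter Asymptotics

/-- If β > α > 0, then there exists x₀ > 0 such that for all k ≥ 4 and x ≥ x₀,
E_α^[k](x) ≥ E_β^[k-2](x), where E_α(x) = exp(x^α). -/
theorem stmt_3 (α β : ℝ) (hα : 0 < α) (hαβ : α < β) :
    ∃ x₀ > (0:ℝ), ∀ k : ℕ, 4 ≤ k → ∀ x : ℝ, x₀ ≤ x →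
      (fun t : ℝ => Real.exp (t ^ β))^[k - 2] x ≤ (fun t : ℝ => Real.exp (t ^ α))^[k] x := by
  have hβ : 0 < β := hα.trans hαβ
  obtain ⟨T, hT1, hTα⟩ : ∃ T : ℝ, 1 ≤ T ∧ 4*β + 8 ≤ α * T := by
    refine ⟨(4*β+8)/α + 4, ?_, ?_⟩
    · have h0 : 0 ≤ (4*β+8)/α := by positivity
      linarith
    · have h : α * ((4*β+8)/α) = 4*β+8 := by field_simp
      calc 4*β+8 = α*((4*β+8)/α) := h.symm
        _ ≤ α*((4*β+8)/α) + α*4 := by nlinarith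
        _ = α * ((4*β+8)/α + 4) := by ring
  have hT0 : 0 ≤ T := by linarith
  have hc2 : β + T ≤ α * Real.exp T := by
    have h1 : T/2 + 1 ≤ Real.exp (T/2) := Real.add_one_le_exp _
    have h2 : Real.exp T = Real.exp (T/2) * Real.exp (T/2) := by
      rw [← Real.exp_add]; ring_nf
    have hE2 : (T/2 + 1) * (T/2 + 1) ≤ Real.exp (T/2) * Real.exp (T/2) :=
      mul_le_mul h1 h1 (by linarith) (Real.exp_pos _).le
    have h3 : α * ((T/2 + 1) * (T/2 + 1)) ≤ α * (Real.exp (T/2) * Real.exp (T/2)) :=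
      mul_le_mul_of_nonneg_left hE2 hα.le
    have hTT : (4*β + 8) * T ≤ (α * T) * T := mul_le_mul_of_nonneg_right hTα hT0
    rw [h2]
    nlinarith [h3, hTT, hTα, mul_nonneg (by linarith : (0:ℝ) ≤ T - 1) hβ.le, hα.le]
  have hc1 : 1 ≤ Real.exp T := Real.one_le_exp hT0
  have exp_rpow_α : ∀ s : ℝ, (Real.exp s) ^ α = Real.exp (s * α) := fun s => by
    rw [Real.rpow_def_of_pos (Real.exp_pos s), Real.log_exp]
  have exp_rpow_β : ∀ s : ℝ, (Real.exp s) ^ β = Real.exp (s * β) := fun s => by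
    rw [Real.rpow_def_of_pos (Real.exp_pos s), Real.log_exp]
  -- choose x₀
  have hev : ∀ᶠ x : ℝ in atTop, 1 ≤ x ∧ T + β * Real.log x ≤ α^2 * x ^ α := by
    have hlo : (fun x : ℝ => β * Real.log x) =o[atTop] fun x : ℝ => x ^ α :=
      (isLittleO_log_rpow_atTop hα).const_mul_left β
    have h1 := hlo.def (by positivity : (0:ℝ) < α^2/2)
    have h2 := (tendsto_rpow_atTop hα).eventually_ge_atTop (2*T/α^2)
    filter_upwards [h1, h2, eventually_ge_atTop (1:ℝ)] with x hx1 hx2 hx3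
    refine ⟨hx3, ?_⟩
    have hxpow : 0 ≤ x ^ α := Real.rpow_nonneg (by linarith) α
    have hlogb : β * Real.log x ≤ α^2/2 * x ^ α := by
      calc β * Real.log x ≤ ‖β * Real.log x‖ := le_abs_self _
        _ ≤ α^2/2 * ‖x ^ α‖ := hx1
        _ = α^2/2 * x ^ α := by rw [Real.norm_eq_abs, abs_of_nonneg hxpow]
    have hα2 : (0:ℝ) < α ^ 2 := by positivity
    rw [div_le_iff₀ hα2] at hx2
    nlinarith [hlogb, hx2]
  obtain ⟨a, ha⟩ := eventually_atTop.mp hev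
  refine ⟨max a 1, lt_of_lt_of_le one_pos (le_max_right a 1), ?_⟩
  intro k hk x hx
  have hx1 : 1 ≤ x := le_trans (le_max_right a 1) hx
  have hx0 : (0:ℝ) < x := by linarith
  obtain ⟨hx1', hxA⟩ := ha x (le_trans (le_max_left a 1) hx)
  set f : ℝ → ℝ := fun t : ℝ => Real.exp (t ^ α) with hf
  set g : ℝ → ℝ := fun t : ℝ => Real.exp (t ^ β) with hg
  -- core step lemma
  have keyB : ∀ u v : ℝ, 1 ≤ u → Real.exp T * u ≤ v →
      Real.exp T * (Real.exp u) ^ β ≤ (Real.exp v) ^ α := by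
    intro u v hu huv
    rw [exp_rpow_α, exp_rpow_β, ← Real.exp_add]
    apply Real.exp_le_exp.mpr
    have h1 : α * (Real.exp T * u) ≤ α * v := mul_le_mul_of_nonneg_left huv hα.le
    have h2 : (β + T) * u ≤ (α * Real.exp T) * u :=
      mul_le_mul_of_nonneg_right hc2 (by linarith)
    nlinarith [h1, h2, hβ.le, mul_nonneg (by linarith : (0:ℝ) ≤ u - 1) hT0]
  -- main induction
  have P : ∀ n : ℕ, 1 ≤ g^[n] x ∧ Real.exp T * (g^[n] x) ^ β ≤ (f^[n+2] x) ^ α := by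
    intro n
    induction n with
    | zero =>
      refine ⟨by simpa using hx1, ?_⟩
      simp only [Function.iterate_zero_apply]
      show Real.exp T * x ^ β ≤ (f (f x)) ^ α
      have e3 : f (f x) = Real.exp ((Real.exp (x ^ α)) ^ α) := rfl
      have e4 : (f (f x)) ^ α = Real.exp (Real.exp (x ^ α * α) * α) := by
        rw [e3]; simp only [exp_rpow_α]
      rw [e4, Real.rpow_def_of_pos hx0 β, ← Real.exp_add]
      apply Real.exp_le_exp.mpr
      -- T + log x * β ≤ exp (x^α * α) * α
      have h5 := Real.add_one_le_exp (x ^ α * α)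
      have h6 : (x ^ α * α + 1) * α ≤ Real.exp (x ^ α * α) * α :=
        mul_le_mul_of_nonneg_right h5 hα.le
      nlinarith [h6, hxA, hα.le]
    | succ n ih =>
      obtain ⟨ih1, ih2⟩ := ih
      have h1 : g^[n+1] x = Real.exp ((g^[n] x) ^ β) := Function.iterate_succ_apply' g n x
      have h2 : f^[n+1+2] x = Real.exp ((f^[n+2] x) ^ α) := Function.iterate_succ_apply' f (n+2) x
      constructor
      · rw [h1]
        exact Real.one_le_exp (Real.rpow_nonneg (by linarith) β)
      · rw [h1, h2]
        exact keyB _ _ (Real.one_le_rpow ih1 hβ.le) ih2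
  -- conclusion
  obtain ⟨m, rfl⟩ : ∃ m, k = m + 4 := ⟨k - 4, by omega⟩
  have hkk : m + 4 - 2 = m + 2 := rfl
  rw [hkk]
  obtain ⟨hP1, hP2⟩ := P (m+1)
  have h1 : g^[m+2] x = Real.exp ((g^[m+1] x) ^ β) := Function.iterate_succ_apply' g (m+1) x
  have h2 : f^[m+4] x = Real.exp ((f^[m+3] x) ^ α) := Function.iterate_succ_apply' f (m+3) x
  show g^[m+2] x ≤ f^[m+4] x
  rw [h1, h2]
  apply Real.exp_le_exp.mpr
  have hnn : 0 ≤ (g^[m+1] x) ^ β := Real.rpow_nonneg (by linarith) β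
  calc (g^[m+1] x) ^ β ≤ Real.exp T * (g^[m+1] x) ^ β := le_mul_of_one_le_left hnn hc1
    _ ≤ (f^[m+1+2] x) ^ α := hP2
    _ = (f^[m+3] x) ^ α := rfl
end

section
/- Let d ≥ 3, ν = d − 5/2, and let b_j, b_k be nonzero complex numbers with j ≠ k and b_j ≠ b_k. Set P_{j,k}(z) = (b_j − b_k)z^d + (P_j(z) − P_k(z)) with deg(P_j − P_k) < d. There exists a constant C₁ > 0 and R > 0 such that: if z ∈ ℂ with |z| ≥ R satisfies |Re(P_{j,k}(z))| ≥ 2|P_{j,k}(z)|^{ν/d}, then every w ∈ D(z,1) satisfying |Re(P_{j,k}(w))| ≤ |P_{j,k}(w)|^{ν/d} obeys |z − w| ≥ C₁ |z|^{−3/2}. -/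
/-! For large `‖z‖` the leading term dominates, `‖P z‖ ≥ (‖b_j - b_k‖ / 2) ‖z‖ ^ d`, while on
`D(z, 1)` the polynomial is Lipschitz with constant `L ‖z‖ ^ (d - 1)`, which is small enough that
`‖P w‖ ≤ (3/2) ‖P z‖`. The real part then drops from at least `2 ‖P z‖ ^ α` to at most
`‖P w‖ ^ α ≤ (3/2) ‖P z‖ ^ α` (with `α = ν / d ≤ 1`), so `‖P z - P w‖ ≥ ‖P z‖ ^ α / 2`, which is of
order `‖z‖ ^ ν = ‖z‖ ^ (d - 1) ‖z‖ ^ (-3/2)`. Dividing by the Lipschitz constant gives the bound. -/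

open Finset Polynomial

section NormBounds

variable {R : Type*}

theorem norm_pow_sub_pow_le [SeminormedCommRing R] [NormOneClass R] {x y : R} {B : ℝ}
    (hx : ‖x‖ ≤ B) (hy : ‖y‖ ≤ B) (n : ℕ) :
    ‖x ^ n - y ^ n‖ ≤ n * B ^ (n - 1) * ‖x - y‖ := by
  have hB : 0 ≤ B := (norm_nonneg x).trans hx
  rw [← geom_sum₂_mul]
  refine (norm_mul_le _ _).trans (mul_le_mul_of_nonneg_right ?_ (norm_nonneg _))
  calc ‖∑ i ∈ range n, x ^ i * y ^ (n - 1 - i)‖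
      ≤ ∑ i ∈ range n, B ^ i * B ^ (n - 1 - i) := by
        refine (norm_sum_le _ _).trans (sum_le_sum fun i _ => (norm_mul_le _ _).trans ?_)
        gcongr <;> exact (norm_pow_le _ _).trans (by gcongr)
    _ = n * B ^ (n - 1) := by
        rw [sum_congr rfl fun i hi => pow_mul_pow_sub B (Nat.le_sub_one_of_lt (mem_range.mp hi)),
          sum_const, card_range, nsmul_eq_mul]

theorem norm_sum_range_mul_pow_le [SeminormedRing R] [NormOneClass R] (a : ℕ → R) {z : R}
    (hz : 1 ≤ ‖z‖) (n : ℕ) :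
    ‖∑ i ∈ range (n + 1), a i * z ^ i‖ ≤ (∑ i ∈ range (n + 1), ‖a i‖) * ‖z‖ ^ n := by
  rw [sum_mul]
  refine (norm_sum_le _ _).trans (sum_le_sum fun i hi => (norm_mul_le _ _).trans ?_)
  gcongr
  exact (norm_pow_le _ _).trans (pow_le_pow_right₀ hz (Nat.lt_succ_iff.mp (mem_range.mp hi)))

end NormBounds

namespace Polynomial

theorem norm_eval_sub_eval_le {R : Type*} [SeminormedCommRing R] [NormOneClass R] {p : R[X]}
    {n : ℕ} (hp : p.natDegree ≤ n) {x y : R} {B : ℝ} (hB : 1 ≤ B) (hx : ‖x‖ ≤ B)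
    (hy : ‖y‖ ≤ B) :
    ‖p.eval x - p.eval y‖ ≤ (∑ i ∈ range (n + 1), ‖p.coeff i‖) * (n * B ^ (n - 1)) * ‖x - y‖ := by
  rw [eval_eq_sum_range' (Nat.lt_succ_of_le hp), eval_eq_sum_range' (Nat.lt_succ_of_le hp),
    ← sum_sub_distrib, sum_mul, sum_mul]
  refine (norm_sum_le _ _).trans (sum_le_sum fun i hi => ?_)
  rw [← mul_sub, mul_assoc]
  refine (norm_mul_le _ _).trans (mul_le_mul_of_nonneg_left ?_ (norm_nonneg _))
  have hin : i ≤ n := Nat.lt_succ_iff.mp (mem_range.mp hi)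
  calc ‖x ^ i - y ^ i‖ ≤ i * B ^ (i - 1) * ‖x - y‖ := norm_pow_sub_pow_le hx hy i
    _ ≤ n * B ^ (n - 1) * ‖x - y‖ := by gcongr

variable {𝕜 : Type*} [NormedField 𝕜]

theorem norm_coeff_mul_pow_le_two_mul_norm_eval {P : 𝕜[X]} {n : ℕ} (hP : P.natDegree ≤ n + 1)
    {z : 𝕜} (hz : 1 ≤ ‖z‖)
    (hlead : 2 * ∑ i ∈ range (n + 1), ‖P.coeff i‖ ≤ ‖P.coeff (n + 1)‖ * ‖z‖) :
    ‖P.coeff (n + 1)‖ * ‖z‖ ^ (n + 1) ≤ 2 * ‖P.eval z‖ := by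
  rw [eval_eq_sum_range' (Nat.lt_succ_of_le hP), sum_range_succ]
  have hlow := norm_sum_range_mul_pow_le P.coeff hz n
  set s := ∑ i ∈ range (n + 1), P.coeff i * z ^ i
  have htri : ‖P.coeff (n + 1) * z ^ (n + 1)‖ ≤ ‖s + P.coeff (n + 1) * z ^ (n + 1)‖ + ‖s‖ := by
    simpa using norm_sub_le (s + P.coeff (n + 1) * z ^ (n + 1)) s
  rw [norm_mul, norm_pow] at htri
  have hs : 2 * ‖s‖ ≤ ‖P.coeff (n + 1)‖ * ‖z‖ ^ (n + 1) := calc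
    2 * ‖s‖ ≤ 2 * (∑ i ∈ range (n + 1), ‖P.coeff i‖) * ‖z‖ ^ n := by linarith
    _ ≤ ‖P.coeff (n + 1)‖ * ‖z‖ * ‖z‖ ^ n := by gcongr
    _ = ‖P.coeff (n + 1)‖ * ‖z‖ ^ (n + 1) := by ring
  linarith

theorem exists_norm_eval_estimates {P : 𝕜[X]} {n : ℕ} (hP : P.natDegree = n + 1) :
    ∃ A > 0, ∃ L > 0, ∃ R ≥ 1, ∀ z w : 𝕜, R ≤ ‖z‖ → ‖z - w‖ ≤ 1 →
      A * ‖z‖ ^ (n + 1) ≤ ‖P.eval z‖ ∧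
      ‖P.eval z - P.eval w‖ ≤ L * ‖z‖ ^ n * ‖z - w‖ ∧
      ‖P.eval w‖ ≤ 3 / 2 * ‖P.eval z‖ := by
  have hc : 0 < ‖P.coeff (n + 1)‖ := by
    rw [norm_pos_iff, ← hP, coeff_natDegree, Ne, leadingCoeff_eq_zero]
    rintro rfl
    simp at hP
  set c := P.coeff (n + 1)
  set M := ∑ i ∈ range (n + 1), ‖P.coeff i‖
  set S := ∑ i ∈ range (n + 2), ‖P.coeff i‖
  have hS : 0 < S := hc.trans_le <| single_le_sum (fun i _ => norm_nonneg (P.coeff i))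
    (self_mem_range_succ (n + 1))
  set L := S * (n + 1) * 2 ^ n
  have hM : 0 ≤ M := sum_nonneg fun i _ => norm_nonneg _
  have hR : 0 ≤ 2 * M / ‖c‖ + 4 * L / ‖c‖ := by positivity
  refine ⟨‖c‖ / 2, by positivity, L, by positivity, 1 + (2 * M / ‖c‖ + 4 * L / ‖c‖),
    le_add_of_nonneg_right hR, fun z w hz hzw => ?_⟩
  have hz₁ : 1 ≤ ‖z‖ := by linarith
  have hMz : 2 * M ≤ ‖c‖ * ‖z‖ := by
    rw [← div_le_iff₀' hc]; linarith [div_nonneg (by positivity : 0 ≤ 4 * L) hc.le]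
  have hLz : 4 * L ≤ ‖c‖ * ‖z‖ := by
    rw [← div_le_iff₀' hc]; linarith [div_nonneg (by positivity : 0 ≤ 2 * M) hc.le]
  have hlow : ‖c‖ / 2 * ‖z‖ ^ (n + 1) ≤ ‖P.eval z‖ := by
    linarith [norm_coeff_mul_pow_le_two_mul_norm_eval hP.le hz₁ hMz]
  have hlip : ‖P.eval z - P.eval w‖ ≤ L * ‖z‖ ^ n * ‖z - w‖ := by
    have hw : ‖w‖ ≤ 2 * ‖z‖ := by linarith [norm_le_norm_add_norm_sub' w z, norm_sub_rev w z]
    refine (norm_eval_sub_eval_le hP.le (by linarith) (by linarith) hw).trans_eq ?_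
    simp only [Nat.add_sub_cancel, L, S, mul_pow]
    push_cast
    ring
  refine ⟨hlow, hlip, ?_⟩
  have hsmall : ‖P.eval z - P.eval w‖ ≤ ‖P.eval z‖ / 2 := calc
    _ ≤ L * ‖z‖ ^ n * 1 := hlip.trans (by gcongr)
    _ ≤ ‖c‖ / 4 * ‖z‖ * ‖z‖ ^ n := by nlinarith [pow_nonneg (norm_nonneg z) n]
    _ = ‖c‖ / 2 * ‖z‖ ^ (n + 1) / 2 := by ring
    _ ≤ ‖P.eval z‖ / 2 := by linarith
  linarith [norm_le_norm_add_norm_sub (P.eval z) (P.eval w)]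

end Polynomial

theorem Complex.rpow_norm_le_two_mul_norm_sub {p q : ℂ} {α : ℝ} (hα₀ : 0 ≤ α) (hα₁ : α ≤ 1)
    (hqp : ‖q‖ ≤ 3 / 2 * ‖p‖) (hp : 2 * ‖p‖ ^ α ≤ |p.re|) (hq : |q.re| ≤ ‖q‖ ^ α) :
    ‖p‖ ^ α ≤ 2 * ‖p - q‖ := by
  have hqα : ‖q‖ ^ α ≤ 3 / 2 * ‖p‖ ^ α := calc
    ‖q‖ ^ α ≤ (3 / 2 * ‖p‖) ^ α := Real.rpow_le_rpow (norm_nonneg q) hqp hα₀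
    _ = (3 / 2) ^ α * ‖p‖ ^ α := Real.mul_rpow (by norm_num) (norm_nonneg p)
    _ ≤ 3 / 2 * ‖p‖ ^ α := by gcongr; exact Real.rpow_le_self_of_one_le (by norm_num) hα₁
  have hre : |p.re| - |q.re| ≤ ‖p - q‖ :=
    (abs_sub_abs_le_abs_sub _ _).trans (by simpa using Complex.abs_re_le_norm (p - q))
  linarith

theorem pow_succ_rpow_eq_pow_mul_rpow_neg_three_halves {x : ℝ} (hx : 0 < x) (n : ℕ) :
    (x ^ (n + 1)) ^ ((((n + 1 : ℕ) : ℝ) - 5 / 2) / (n + 1 : ℕ)) = x ^ n * x ^ (-(3 / 2) : ℝ) := by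
  rw [← Real.rpow_natCast x (n + 1), ← Real.rpow_mul hx.le, ← Real.rpow_natCast x n,
    ← Real.rpow_add hx]
  congr 1
  field_simp
  push_cast
  ring

theorem stmt_9_general (d : ℕ) (hd : 3 ≤ d) (bj bk : ℂ)
    (hne : bj ≠ bk) (Q : Polynomial ℂ) (hQ : Q.degree < d)
    (Pjk : ℂ → ℂ) (hPjk : ∀ z, Pjk z = (bj - bk) * z ^ d + Q.eval z) :
    ∃ C₁ > (0:ℝ), ∃ R > (0:ℝ), ∀ z : ℂ, R ≤ ‖z‖ →
      2 * ‖Pjk z‖ ^ (((d : ℝ) - 5/2) / d) ≤ |(Pjk z).re| →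
      ∀ w ∈ Metric.ball z 1,
        |(Pjk w).re| ≤ ‖Pjk w‖ ^ (((d : ℝ) - 5/2) / d) →
        C₁ * ‖z‖ ^ (-(3/2) : ℝ) ≤ ‖z - w‖ := by
  obtain ⟨n, rfl⟩ : ∃ n, d = n + 1 := ⟨d - 1, by omega⟩
  set α : ℝ := (((n + 1 : ℕ) : ℝ) - 5 / 2) / (n + 1 : ℕ)
  have hd' : (3 : ℝ) ≤ (n + 1 : ℕ) := by exact_mod_cast hd
  have hα₀ : 0 ≤ α := div_nonneg (by linarith) (Nat.cast_nonneg _)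
  have hα₁ : α ≤ 1 := div_le_one_of_le₀ (by linarith) (Nat.cast_nonneg _)
  set P : ℂ[X] := C (bj - bk) * X ^ (n + 1) + Q
  have hP : P.natDegree = n + 1 := by
    rw [natDegree_add_eq_left_of_degree_lt, natDegree_C_mul_X_pow _ _ (sub_ne_zero.mpr hne)]
    rwa [degree_C_mul_X_pow _ (sub_ne_zero.mpr hne)]
  have hPjkP : ∀ z, Pjk z = P.eval z := by simp [hPjk, P]
  obtain ⟨A, hA, L, hL, R, hR, hbounds⟩ := exists_norm_eval_estimates hP
  refine ⟨A ^ α / (2 * L), by positivity, R, by positivity, fun z hz hPz w hw hPw => ?_⟩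
  have hzw : ‖z - w‖ ≤ 1 := (mem_ball_iff_norm'.mp hw).le
  obtain ⟨hlow, hlip, hwz⟩ := hbounds z w hz hzw
  rw [hPjkP] at hPz hPw
  have hz₀ : 0 < ‖z‖ := by linarith
  have hgrowth : A ^ α * (‖z‖ ^ n * ‖z‖ ^ (-(3 / 2) : ℝ)) ≤ ‖P.eval z‖ ^ α := by
    rw [← pow_succ_rpow_eq_pow_mul_rpow_neg_three_halves hz₀, ← Real.mul_rpow hA.le (by positivity)]
    exact Real.rpow_le_rpow (by positivity) hlow hα₀
  have hsep := Complex.rpow_norm_le_two_mul_norm_sub hα₀ hα₁ hwz hPz hPw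
  rw [div_mul_eq_mul_div, div_le_iff₀ (by positivity)]
  refine le_of_mul_le_mul_left ?_ (pow_pos hz₀ n)
  calc ‖z‖ ^ n * (A ^ α * ‖z‖ ^ (-(3 / 2) : ℝ))
      = A ^ α * (‖z‖ ^ n * ‖z‖ ^ (-(3 / 2) : ℝ)) := by ring
    _ ≤ 2 * ‖P.eval z - P.eval w‖ := hgrowth.trans hsep
    _ ≤ 2 * (L * ‖z‖ ^ n * ‖z - w‖) := by gcongr
    _ = ‖z‖ ^ n * (‖z - w‖ * (2 * L)) := by ring

/-- Points outside E₂ are at distance at least C₁|z|^{-3/2} from nearby points of E₁. -/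
theorem stmt_9 (d : ℕ) (hd : 3 ≤ d) (bj bk : ℂ) (hbj : bj ≠ 0) (hbk : bk ≠ 0)
    (hne : bj ≠ bk) (Q : Polynomial ℂ) (hQ : Q.degree < d)
    (Pjk : ℂ → ℂ) (hPjk : ∀ z, Pjk z = (bj - bk) * z ^ d + Q.eval z) :
    ∃ C₁ > (0:ℝ), ∃ R > (0:ℝ), ∀ z : ℂ, R ≤ ‖z‖ →
      2 * ‖Pjk z‖ ^ (((d : ℝ) - 5/2) / d) ≤ |(Pjk z).re| →
      ∀ w ∈ Metric.ball z 1,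
        |(Pjk w).re| ≤ ‖Pjk w‖ ^ (((d : ℝ) - 5/2) / d) →
        C₁ * ‖z‖ ^ (-(3/2) : ℝ) ≤ ‖z - w‖ :=
  stmt_9_general d hd bj bk hne Q hQ Pjk hPjk
end

section
/- Define h(z) = exp(iz)·sinh(z³). For every ε > 0 there exists r₀ > 1 such that for all z = r·e^{iθ} with r ≥ r₀ and |θ − π/2| ≤ 1/(r² log r), one has |h(z)| ≤ exp(−r/4) < ε. -/
open Real

/-
On the ray of argument `θ`, `exp (I z)` has modulus `exp (-r sin θ)` and `sinh (z³)` has modulus at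
most `exp (r³ |cos 3θ|)`. Near `θ = π/2` we have `sin θ ≥ 1/2`, while `cos 3θ` vanishes at `3π/2`
to first order, so `|cos 3θ| ≤ 3 |θ - π/2| ≤ 3 / (r² log r)`. Hence the exponent is at most
`-r/2 + 3r / log r ≤ -r/4` once `log r ≥ 12`.
-/

lemma Complex.norm_sinh_le_exp_abs_re (w : ℂ) : ‖Complex.sinh w‖ ≤ Real.exp |w.re| := by
  have hexp : ‖Complex.exp w‖ ≤ Real.exp |w.re| := by
    rw [Complex.norm_exp]; exact exp_le_exp.2 (le_abs_self _)
  have hexp_neg : ‖Complex.exp (-w)‖ ≤ Real.exp |w.re| := by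
    rw [Complex.norm_exp, Complex.neg_re]; exact exp_le_exp.2 (neg_le_abs _)
  calc ‖Complex.sinh w‖ = ‖Complex.exp w - Complex.exp (-w)‖ / 2 := by
        rw [Complex.sinh, norm_div, Complex.norm_two]
    _ ≤ (‖Complex.exp w‖ + ‖Complex.exp (-w)‖) / 2 := by gcongr; exact norm_sub_le _ _
    _ ≤ Real.exp |w.re| := by linarith

lemma Complex.re_pow_eq_norm_pow_mul_cos (z : ℂ) (n : ℕ) :
    (z ^ n).re = ‖z‖ ^ n * Real.cos (n * Complex.arg z) := by
  conv_lhs => rw [← Complex.norm_mul_exp_arg_mul_I z]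
  rw [mul_pow, ← Complex.exp_nat_mul, ← Complex.ofReal_pow,
    show (n : ℂ) * (Complex.arg z * Complex.I) = ((n * Complex.arg z : ℝ) : ℂ) * Complex.I by
      push_cast; ring,
    Complex.re_ofReal_mul, Complex.exp_ofReal_mul_I_re]

lemma Real.half_le_sin_of_abs_sub_pi_div_two_le_one {θ : ℝ} (hθ : |θ - π / 2| ≤ 1) :
    1 / 2 ≤ sin θ := by
  have hsq : (θ - π / 2) ^ 2 ≤ 1 := by
    rw [← sq_abs]; exact pow_le_one₀ (abs_nonneg _) hθ
  calc 1 / 2 ≤ 1 - (θ - π / 2) ^ 2 / 2 := by linarith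
    _ ≤ cos (θ - π / 2) := one_sub_sq_div_two_le_cos
    _ = sin θ := cos_sub_pi_div_two θ

lemma Real.abs_cos_three_mul_le (θ : ℝ) : |cos (3 * θ)| ≤ 3 * |θ - π / 2| := by
  have hcos : cos (3 * θ) = sin (3 * (θ - π / 2)) := by
    rw [show 3 * θ = 3 * (θ - π / 2) + π / 2 + π by ring, cos_add_pi, cos_add_pi_div_two, neg_neg]
  calc |cos (3 * θ)| = |sin (3 * (θ - π / 2))| := by rw [hcos]
    _ ≤ |3 * (θ - π / 2)| := abs_sin_le_abs
    _ = 3 * |θ - π / 2| := by rw [abs_mul, abs_of_pos three_pos]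

lemma norm_exp_I_mul_mul_sinh_pow_three_le (z : ℂ) :
    ‖Complex.exp (Complex.I * z) * Complex.sinh (z ^ 3)‖
      ≤ Real.exp (-(‖z‖ * sin (Complex.arg z)) + ‖z‖ ^ 3 * |cos (3 * Complex.arg z)|) := by
  have hre : (Complex.I * z).re = -(‖z‖ * sin (Complex.arg z)) := by
    rw [Complex.norm_mul_sin_arg, Complex.I_mul_re]
  have hsinh : ‖Complex.sinh (z ^ 3)‖ ≤ Real.exp (‖z‖ ^ 3 * |cos (3 * Complex.arg z)|) := by
    calc ‖Complex.sinh (z ^ 3)‖ ≤ Real.exp |(z ^ 3).re| := Complex.norm_sinh_le_exp_abs_re _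
      _ = Real.exp (‖z‖ ^ 3 * |cos (3 * Complex.arg z)|) := by
        rw [Complex.re_pow_eq_norm_pow_mul_cos, abs_mul, abs_of_nonneg (by positivity)]
        norm_num
  rw [norm_mul, Complex.norm_exp, hre, exp_add]
  gcongr

lemma neg_mul_sin_add_pow_three_mul_abs_cos_le {r θ : ℝ} (hr : exp 12 ≤ r)
    (hθ : |θ - π / 2| ≤ 1 / (r ^ 2 * log r)) :
    -(r * sin θ) + r ^ 3 * |cos (3 * θ)| ≤ -r / 4 := by
  have hr1 : 1 ≤ r := (one_le_exp (by norm_num)).trans hr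
  have hlog : 12 ≤ log r := by simpa using log_le_log (exp_pos 12) hr
  have hwidth : 1 / (r ^ 2 * log r) ≤ 1 := by
    rw [div_le_one (by positivity)]
    nlinarith [one_le_pow₀ (n := 2) hr1]
  have hsin := half_le_sin_of_abs_sub_pi_div_two_le_one (hθ.trans hwidth)
  have hcos : r ^ 3 * |cos (3 * θ)| ≤ 3 * r / log r :=
    calc r ^ 3 * |cos (3 * θ)| ≤ r ^ 3 * (3 * (1 / (r ^ 2 * log r))) := by
          gcongr; exact (abs_cos_three_mul_le θ).trans (by gcongr)
      _ = 3 * r / log r := by field_simp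
  have hsmall : 3 * r / log r ≤ r / 4 := by
    rw [div_le_div_iff₀ (by positivity) (by norm_num)]
    nlinarith
  nlinarith

lemma exp_neg_div_four_lt {ε r : ℝ} (hε : 0 < ε) (hr : 1 - 4 * log ε ≤ r) :
    exp (-r / 4) < ε := by
  rw [← exp_log hε, exp_lt_exp]
  linarith

/-- For h(z) = exp(iz) sinh(z³): on the set where |z| ≥ r₀ and
|arg z - π/2| ≤ 1/(|z|² log|z|), one has |h(z)| ≤ exp(-|z|/4) < ε. -/
theorem stmt_16 :
    ∀ ε > (0:ℝ), ∃ r₀ > (1:ℝ), ∀ z : ℂ, r₀ ≤ ‖z‖ →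
      |Complex.arg z - π / 2| ≤ 1 / ((‖z‖) ^ 2 * Real.log (‖z‖)) →
      ‖Complex.exp (Complex.I * z) * Complex.sinh (z ^ 3)‖
          ≤ Real.exp (-(‖z‖) / 4) ∧
        Real.exp (-(‖z‖) / 4) < ε := by
  intro ε hε
  refine ⟨max (exp 12) (1 - 4 * log ε), lt_max_of_lt_left (one_lt_exp_iff.2 (by norm_num)),
    fun z hr hθ => ⟨?_, exp_neg_div_four_lt hε (le_of_max_le_right hr)⟩⟩
  calc _ ≤ _ := norm_exp_I_mul_mul_sinh_pow_three_le z
    _ ≤ Real.exp (-‖z‖ / 4) :=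
      exp_le_exp.2 (neg_mul_sin_add_pow_three_mul_abs_cos_le (le_of_max_le_left hr) hθ)
end

section
/- Let b₁, …, b_N ∈ ℂ \ {0} (N ≥ 3) be such that, writing arguments in [0, 2π), one has arg(b_j) ≤ arg(b_{j+1}) < arg(b_j) + π for j = 1, …, N−1 and arg(b_N) > arg(b_1) + π. Then there exists a constant C > 0 such that for every z ∈ ℂ there is an index j ∈ {1, …, N} with Re(b_j z^d) ≥ 2C|z|^d, for any fixed positive integer d. -/
/-!
Write `α_j = arg₂π b_j` and `ψ = arg w`, so that `Re (b_j w) = |b_j| |w| cos (α_j + ψ)`.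
If all these cosines were `≤ 0`, then after shifting `ψ` by a multiple of `2π` the points
`α_j + ψ` would all lie in the band `[π/2, 3π/2]`: the first one does, and a step of length
`< π` cannot jump over the gap `(3π/2, 5π/2)` where the cosine is positive. This contradicts
`α_N - α_1 > π`. Hence `u ↦ max_j Re (b_j u)` is positive on the unit circle, and its minimum
there gives the constant by homogeneity.
-/

open Real

/-- The argument of a nonzero complex number chosen in [0, 2π). -/
noncomputable def arg2pi (z : ℂ) : ℝ :=
  if Complex.arg z < 0 then Complex.arg z + 2 * π else Complex.arg z

lemma le_three_pi_div_two_of_cos_nonpos {x : ℝ} (hx : x < 5 * π / 2) (hcos : cos x ≤ 0) :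
    x ≤ 3 * π / 2 := by
  by_contra! h
  have : 0 < cos (x - 2 * π) := cos_pos_of_mem_Ioo ⟨by linarith, by linarith⟩
  rw [cos_sub_two_pi] at this
  linarith

lemma exists_cos_pos_of_add_pi_lt (N : ℕ) (hN : 1 ≤ N) (α : ℕ → ℝ)
    (hstep : ∀ j, 1 ≤ j → j < N → α (j + 1) < α j + π) (hspan : α 1 + π < α N) (ψ : ℝ) :
    ∃ j ∈ Finset.Icc 1 N, 0 < cos (α j + ψ) := by
  by_contra! hcos
  set n := toIcoDiv two_pi_pos (π / 2) (α 1 + ψ)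
  set ψ' := ψ - n * (2 * π)
  have hcos' : ∀ j ∈ Finset.Icc 1 N, cos (α j + ψ') ≤ 0 := fun j hj => by
    rw [show α j + ψ' = α j + ψ - n * (2 * π) by ring, cos_sub_int_mul_two_pi]
    exact hcos j hj
  have hfirst : α 1 + ψ' ∈ Set.Ico (π / 2) (π / 2 + 2 * π) := by
    rw [show α 1 + ψ' = toIcoMod two_pi_pos (π / 2) (α 1 + ψ) by
      rw [← self_sub_toIcoDiv_zsmul, zsmul_eq_mul]; ring]
    exact toIcoMod_mem_Ico _ _ _
  have hband : ∀ j, 1 ≤ j → j ≤ N → α j + ψ' ≤ 3 * π / 2 := by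
    intro j hj
    induction j, hj using Nat.le_induction with
    | base =>
      intro h1N
      exact le_three_pi_div_two_of_cos_nonpos (by linarith [hfirst.2])
        (hcos' 1 (Finset.mem_Icc.2 ⟨le_rfl, h1N⟩))
    | succ j hj ih =>
      intro hjN
      have hlt := hstep j hj hjN
      exact le_three_pi_div_two_of_cos_nonpos (by linarith [ih (by omega)])
        (hcos' (j + 1) (Finset.mem_Icc.2 ⟨by omega, hjN⟩))
  linarith [hband N hN le_rfl, hfirst.1]

lemma arg2pi_coe_angle (z : ℂ) : (arg2pi z : Angle) = Complex.arg z := by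
  unfold arg2pi
  split_ifs
  · rw [Angle.coe_add, Angle.coe_two_pi, add_zero]
  · rfl

lemma re_mul_eq_norm_mul_norm_mul_cos {b w : ℂ} (hb : b ≠ 0) (hw : w ≠ 0) :
    (b * w).re = ‖b‖ * ‖w‖ * cos (arg2pi b + Complex.arg w) := by
  rw [← Complex.norm_mul_cos_arg, norm_mul, ← Angle.cos_coe, ← Angle.cos_coe,
    Complex.arg_mul_coe_angle hb hw, Angle.coe_add, arg2pi_coe_angle]

lemma exists_pos_forall_exists_mul_norm_le_re {ι : Type*} (s : Finset ι) (b : ι → ℂ)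
    (hpos : ∀ u : ℂ, u ≠ 0 → ∃ j ∈ s, 0 < (b j * u).re) :
    ∃ c > 0, ∀ w : ℂ, ∃ j ∈ s, c * ‖w‖ ≤ (b j * w).re := by
  have hs : s.Nonempty := let ⟨j, hj, _⟩ := hpos 1 one_ne_zero; ⟨j, hj⟩
  set F : ℂ → ℝ := fun u => s.sup' hs fun j => (b j * u).re
  have hF : Continuous F := Continuous.finset_sup'_apply hs fun j _ => by fun_prop
  obtain ⟨u₀, hu₀, hmin⟩ := (isCompact_sphere (0 : ℂ) 1).exists_isMinOn
    ⟨1, by simp⟩ hF.continuousOn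
  refine ⟨F u₀, ?_, fun w => ?_⟩
  · obtain ⟨j, hj, hj_pos⟩ := hpos u₀ (by rintro rfl; simp at hu₀)
    exact hj_pos.trans_le (Finset.le_sup' (fun j => (b j * u₀).re) hj)
  rcases eq_or_ne w 0 with rfl | hw
  · obtain ⟨j, hj⟩ := hs
    exact ⟨j, hj, by simp⟩
  set u : ℂ := w / (‖w‖ : ℂ)
  have hu : u ∈ Metric.sphere (0 : ℂ) 1 := by
    simp [u, norm_ne_zero_iff.2 hw]
  have hwu : w = (‖w‖ : ℂ) * u := by
    rw [mul_div_cancel₀ _ (Complex.ofReal_ne_zero.2 (norm_ne_zero_iff.2 hw))]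
  obtain ⟨j, hj, hFu⟩ := Finset.exists_mem_eq_sup' hs fun j => (b j * u).re
  refine ⟨j, hj, ?_⟩
  calc F u₀ * ‖w‖ ≤ F u * ‖w‖ := mul_le_mul_of_nonneg_right (hmin hu) (norm_nonneg w)
    _ = (b j * w).re := by
      conv_rhs => rw [hwu, mul_left_comm, Complex.re_ofReal_mul]
      rw [show F u = (b j * u).re from hFu, mul_comm]

theorem stmt_17_general (N : ℕ) (hN : 3 ≤ N) (b : ℕ → ℂ)
    (hb0 : ∀ j, 1 ≤ j → j ≤ N → b j ≠ 0)
    (hmono : ∀ j, 1 ≤ j → j < N →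
      arg2pi (b j) ≤ arg2pi (b (j + 1)) ∧ arg2pi (b (j + 1)) < arg2pi (b j) + π)
    (hlast : arg2pi (b 1) + π < arg2pi (b N))
    (d : ℕ) :
    ∃ C > (0:ℝ), ∀ z : ℂ, ∃ j, 1 ≤ j ∧ j ≤ N ∧
      2 * C * ‖z‖ ^ d ≤ (b j * z ^ d).re := by
  have hpos : ∀ u : ℂ, u ≠ 0 → ∃ j ∈ Finset.Icc 1 N, 0 < (b j * u).re := by
    intro u hu
    obtain ⟨j, hj, hcos⟩ := exists_cos_pos_of_add_pi_lt N (by omega) (fun j => arg2pi (b j))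
      (fun j hj hjN => (hmono j hj hjN).2) hlast (Complex.arg u)
    obtain ⟨hj1, hjN⟩ := Finset.mem_Icc.1 hj
    have hbj := hb0 j hj1 hjN
    refine ⟨j, hj, ?_⟩
    rw [re_mul_eq_norm_mul_norm_mul_cos hbj hu]
    exact mul_pos (mul_pos (norm_pos_iff.2 hbj) (norm_pos_iff.2 hu)) hcos
  obtain ⟨c, hc, hcw⟩ := exists_pos_forall_exists_mul_norm_le_re _ b hpos
  refine ⟨c / 2, half_pos hc, fun z => ?_⟩
  obtain ⟨j, hj, hle⟩ := hcw (z ^ d)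
  obtain ⟨hj1, hjN⟩ := Finset.mem_Icc.1 hj
  exact ⟨j, hj1, hjN, by rwa [mul_div_cancel₀ _ two_ne_zero, ← norm_pow]⟩

/-- If the directions b₁,…,b_N (arguments in [0,2π)) satisfy
arg(b_j) ≤ arg(b_{j+1}) < arg(b_j)+π and arg(b_N) > arg(b_1)+π, then there is
C > 0 with: for every z there is j with Re(b_j z^d) ≥ 2C|z|^d. -/
theorem stmt_17 (N : ℕ) (hN : 3 ≤ N) (b : ℕ → ℂ)
    (hb0 : ∀ j, 1 ≤ j → j ≤ N → b j ≠ 0)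
    (hmono : ∀ j, 1 ≤ j → j < N →
      arg2pi (b j) ≤ arg2pi (b (j + 1)) ∧ arg2pi (b (j + 1)) < arg2pi (b j) + π)
    (hlast : arg2pi (b 1) + π < arg2pi (b N))
    (d : ℕ) (hd : 0 < d) :
    ∃ C > (0:ℝ), ∀ z : ℂ, ∃ j, 1 ≤ j ∧ j ≤ N ∧
      2 * C * ‖z‖ ^ d ≤ (b j * z ^ d).re :=
  stmt_17_general N hN b hb0 hmono hlast d
end

section
/- Let d ≥ 3, ν = d − 5/2, α ∈ (0, ν). Let b_j, b_k be nonzero complex numbers with arg(b_k) = arg(b_j) + π (mod 2π), let g, g_j, g_k be polynomials with deg(g) ≤ d−1 and deg(g_j), deg(g_k) ≤ d−3, and set P_j = b_j g + g_j, P_k = b_k g + g_k, P_{j,k}(z) = (b_j − b_k)z^d + P_j(z) − P_k(z). Suppose z ∈ ℂ satisfies |Re(P_{j,k}(z))| ≥ |P_{j,k}(z)|^{ν/d} and Re(b_j(z^d + g(z))) ≥ 0. Then for all sufficiently large |z|: Re(b_j z^d + P_j(z)) ≥ (1/4)|b_j|(|b_j| + |b_k|)^{ν/d − 1} |z|^ν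 > 2|z|^α. -/
open Filter

lemma poly_bound_stmt18 (p : Polynomial ℂ) (n : ℕ) (hp : p.degree ≤ n) :
    ∃ C : ℝ, 0 ≤ C ∧ ∀ z : ℂ, 1 ≤ ‖z‖ →
      ‖p.eval z‖ ≤ C * ‖z‖ ^ n := by
  refine ⟨∑ i ∈ Finset.range (n+1), ‖p.coeff i‖,
    Finset.sum_nonneg (fun _ _ => norm_nonneg _), fun z hz => ?_⟩
  have hnd : p.natDegree < n + 1 := Nat.lt_succ_of_le (Polynomial.natDegree_le_iff_degree_le.mpr hp)
  rw [Polynomial.eval_eq_sum_range' hnd, Finset.sum_mul]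
  refine (norm_sum_le _ _).trans (Finset.sum_le_sum fun i hi => ?_)
  rw [norm_mul, norm_pow]
  exact mul_le_mul_of_nonneg_left
    (pow_le_pow_right₀ hz (Nat.lt_succ_iff.mp (Finset.mem_range.mp hi)))
    (norm_nonneg _)

set_option maxHeartbeats 1000000 in
/-- In the case of opposite directions (arg b_k = arg b_j + π), under the extra
condition P_j = b_j g + g_j, P_k = b_k g + g_k with deg g ≤ d-1 and
deg g_j, deg g_k ≤ d-3: for z ∉ E₁ with the j-term dominating and |z| large,
Re(b_j z^d + P_j(z)) ≥ (1/4)|b_j|(|b_j|+|b_k|)^{ν/d-1}|z|^ν > 2|z|^α. -/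
theorem stmt_18 (d : ℕ) (hd : 3 ≤ d) (α : ℝ) (hα : 0 < α) (hαν : α < (d : ℝ) - 5/2)
    (bj bk : ℂ) (hbj : bj ≠ 0) (hbk : bk ≠ 0)
    (hopp : ∃ c : ℝ, 0 < c ∧ bk = -(c : ℂ) * bj)
    (g gj gk : Polynomial ℂ)
    (hg : g.degree ≤ (d - 1 : ℕ)) (hgj : gj.degree ≤ (d - 3 : ℕ))
    (hgk : gk.degree ≤ (d - 3 : ℕ))
    (Pj Pk Pjk : ℂ → ℂ)
    (hPj : ∀ z, Pj z = bj * g.eval z + gj.eval z)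
    (hPk : ∀ z, Pk z = bk * g.eval z + gk.eval z)
    (hPjk : ∀ z, Pjk z = (bj - bk) * z ^ d + (Pj z - Pk z)) :
    ∃ R > (0:ℝ), ∀ z : ℂ, R ≤ ‖z‖ →
      ‖Pjk z‖ ^ (((d : ℝ) - 5/2) / d) ≤ |(Pjk z).re| →
      (bk * (z ^ d + g.eval z)).re ≤ (bj * (z ^ d + g.eval z)).re →
      0 ≤ (bj * (z ^ d + g.eval z)).re →
      (1/4) * ‖bj‖ * (‖bj‖ + ‖bk‖) ^ (((d : ℝ) - 5/2) / d - 1)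
          * ‖z‖ ^ ((d : ℝ) - 5/2)
        ≤ (bj * z ^ d + Pj z).re ∧
      2 * ‖z‖ ^ α <
        (1/4) * ‖bj‖ * (‖bj‖ + ‖bk‖) ^ (((d : ℝ) - 5/2) / d - 1)
          * ‖z‖ ^ ((d : ℝ) - 5/2) := by
  obtain ⟨c, hc, hbkc⟩ := hopp
  set ν : ℝ := (d:ℝ) - 5/2 with hν
  clear_value ν
  have hdpos : (0:ℝ) < d := by exact_mod_cast (show 0 < d by omega)
  have hν0 : 0 < ν := lt_trans hα hαν
  have hνd : ν / d ≤ 1 := by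
    rw [div_le_one hdpos, hν]; linarith only []
  have hνd0 : 0 ≤ ν / d := by positivity
  obtain ⟨Cg, hCg0, hCg⟩ := poly_bound_stmt18 g (d-1) hg
  obtain ⟨Cj, hCj0, hCj⟩ := poly_bound_stmt18 gj (d-3) hgj
  obtain ⟨Ck, hCk0, hCk⟩ := poly_bound_stmt18 gk (d-3) hgk
  have hbj0 : 0 < ‖bj‖ := norm_pos_iff.mpr hbj
  have habsbk : ‖bk‖ = c * ‖bj‖ := by
    rw [hbkc, neg_mul, norm_neg, norm_mul, Complex.norm_real, Real.norm_eq_abs, abs_of_pos hc]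
  set B : ℝ := ‖bj‖ + ‖bk‖ with hBdef
  clear_value B
  have hB : B = (1+c) * ‖bj‖ := by rw [hBdef, habsbk]; ring
  have hB0 : 0 < B := by rw [hB]; positivity
  have h1c : (0:ℝ) < 1 + c := by linarith only [hc]
  set K : ℝ := ‖bj‖ * B ^ (ν/d - 1) with hK
  clear_value K
  have hK0 : 0 < K := by
    rw [hK]; exact mul_pos hbj0 (Real.rpow_pos_of_pos hB0 _)
  have hKB : K = B ^ (ν/d) / (1+c) := by
    rw [hK, Real.rpow_sub hB0, Real.rpow_one, hB]
    field_simp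
  set δ : ℝ := min ((1/8) * B ^ (ν/d)) ((1/2) * K) with hδ
  clear_value δ
  have hBν0 : 0 < B ^ (ν/d) := Real.rpow_pos_of_pos hB0 _
  have hδ0 : 0 < δ := by rw [hδ]; exact lt_min (by positivity) (by positivity)
  have hδB : δ ≤ (1/8) * B ^ (ν/d) := by rw [hδ]; exact min_le_left _ _
  have hδK : δ ≤ (1/2) * K := by rw [hδ]; exact min_le_right _ _
  -- eventual conditions on r = |z|
  have e1 : ∀ᶠ r : ℝ in atTop, 1 ≤ r := eventually_ge_atTop 1
  have e2 : ∀ᶠ r : ℝ in atTop, 16*Cg ≤ r := eventually_ge_atTop _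
  have e3 : ∀ᶠ r : ℝ in atTop, Cj + Ck ≤ δ * r ^ ((1:ℝ)/2) :=
    ((tendsto_rpow_atTop (by norm_num : (0:ℝ) < 1/2)).const_mul_atTop hδ0).eventually_ge_atTop _
  have e4 : ∀ᶠ r : ℝ in atTop, 8 < K * r ^ (ν - α) :=
    ((tendsto_rpow_atTop (by linarith only [hαν] : (0:ℝ) < ν - α)).const_mul_atTop
      hK0).eventually_gt_atTop 8
  have e5 : ∀ᶠ r : ℝ in atTop, 16 * (Cj + Ck) ≤ B * r :=
    (tendsto_id.const_mul_atTop hB0).eventually_ge_atTop _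
  obtain ⟨R0, hR0⟩ := eventually_atTop.mp ((((e1.and e2).and e3).and e4).and e5)
  refine ⟨max R0 1, lt_of_lt_of_le one_pos (le_max_right _ _), fun z hz hE hjk hA0 => ?_⟩
  obtain ⟨⟨⟨⟨h1, h2⟩, h3⟩, h4⟩, h5⟩ := hR0 (‖z‖) (le_trans (le_max_left _ _) hz)
  set r := ‖z‖ with hr
  clear_value r
  set A := (bj * (z ^ d + g.eval z)).re with hAdef
  clear_value A
  have hr0 : (0:ℝ) < r := lt_of_lt_of_le one_pos h1
  have h1' : 1 ≤ ‖z‖ := by rw [← hr]; exact h1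
  have hCg' : ‖g.eval z‖ ≤ Cg * r^(d-1) := by rw [hr]; exact hCg z h1'
  have hCj' : ‖gj.eval z‖ ≤ Cj * r^(d-3) := by rw [hr]; exact hCj z h1'
  have hCk' : ‖gk.eval z‖ ≤ Ck * r^(d-3) := by rw [hr]; exact hCk z h1'
  have hrνpos : 0 < r ^ ν := Real.rpow_pos_of_pos hr0 _
  -- lower bound on |z^d + g(z)|
  have hwd : (15/16) * r^d ≤ ‖z^d + g.eval z‖ := by
    have hgz : ‖g.eval z‖ ≤ Cg * r^(d-1) := hCg'
    have hrd1 : r^d = r * r^(d-1) := by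
      conv_lhs => rw [show d = (d-1)+1 from by omega]
      rw [pow_succ']
    have hCgr : Cg * r^(d-1) ≤ (1/16) * r^d := by
      have h16 : Cg * r^(d-1) ≤ (r/16) * r^(d-1) :=
        mul_le_mul_of_nonneg_right (by linarith only [h2]) (pow_nonneg hr0.le (d-1))
      linarith only [h16, hrd1]
    have htri := norm_add_le (z^d + g.eval z) (-(g.eval z))
    simp only [add_neg_cancel_right, norm_neg] at htri
    have hzd : ‖z^d‖ = r^d := by rw [norm_pow, hr]
    linarith only [htri, hgz, hCgr, hzd]
  -- alternative form of Pjk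
  have hPform : Pjk z = ((1+c : ℝ) : ℂ) * (bj * (z^d + g.eval z)) + (gj.eval z - gk.eval z) := by
    rw [hPjk, hPj, hPk, hbkc]; push_cast; ring
  -- bound on the small term
  have hs : ‖gj.eval z - gk.eval z‖ ≤ (Cj + Ck) * r ^ (d-3) := by
    have htri : ‖gj.eval z - gk.eval z‖ ≤
        ‖gj.eval z‖ + ‖gk.eval z‖ := by
      simpa [sub_eq_add_neg] using norm_add_le (gj.eval z) (-(gk.eval z))
    calc ‖gj.eval z - gk.eval z‖
        ≤ ‖gj.eval z‖ + ‖gk.eval z‖ := htri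
      _ ≤ Cj * r^(d-3) + Ck * r^(d-3) := add_le_add hCj' hCk'
      _ = (Cj + Ck) * r^(d-3) := by ring
  have hrd3nn : (0:ℝ) ≤ r ^ (d-3) := pow_nonneg hr0.le _
  -- small term vs (1/16) B r^d
  have hsmall_d : (Cj + Ck) * r^(d-3) ≤ (1/16) * (B * r^d) := by
    have hrd2 : r^(d-2) = r * r^(d-3) := by
      conv_lhs => rw [show d-2 = (d-3)+1 from by omega]
      rw [pow_succ']
    have h52 : (Cj+Ck) * r^(d-3) ≤ (B/16) * r^(d-2) := by
      calc (Cj+Ck) * r^(d-3) ≤ (B*r/16) * r^(d-3) :=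
            mul_le_mul_of_nonneg_right (by linarith only [h5]) hrd3nn
        _ = (B/16) * r^(d-2) := by rw [hrd2]; ring
    have hmon : r^(d-2) ≤ r^d := pow_le_pow_right₀ h1 (by omega)
    have hmon' := mul_le_mul_of_nonneg_left hmon (show (0:ℝ) ≤ B/16 by positivity)
    linarith only [h52, hmon']
  -- small term vs δ r^ν
  have hsδ : (Cj + Ck) * r^(d-3) ≤ δ * r ^ ν := by
    have hcast : (r:ℝ)^(d-3) = r ^ ((d:ℝ) - 3) := by
      rw [← Real.rpow_natCast r (d-3)]
      congr 1
      push_cast [Nat.cast_sub hd]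
      norm_num
    have hsplit : r ^ ((1:ℝ)/2) * r ^ ((d:ℝ)-3) = r ^ ν := by
      rw [← Real.rpow_add hr0, hν]; ring_nf
    calc (Cj + Ck) * r^(d-3) ≤ (δ * r ^ ((1:ℝ)/2)) * r^(d-3) :=
          mul_le_mul_of_nonneg_right h3 hrd3nn
      _ = δ * (r ^ ((1:ℝ)/2) * r ^ ((d:ℝ)-3)) := by rw [hcast]; ring
      _ = δ * r ^ ν := by rw [hsplit]
  -- lower bound on |Pjk z|
  have hPabs : (7/8) * B * r^d ≤ ‖Pjk z‖ := by
    rw [hPform]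
    have t1 : ‖((1+c:ℝ):ℂ) * (bj * (z^d + g.eval z))‖
        = B * ‖z^d + g.eval z‖ := by
      rw [norm_mul, norm_mul, Complex.norm_real, Real.norm_eq_abs, abs_of_pos h1c, hB]; ring
    have htri := norm_add_le
      (((1+c:ℝ):ℂ) * (bj * (z^d + g.eval z)) + (gj.eval z - gk.eval z))
      (-(gj.eval z - gk.eval z))
    simp only [add_neg_cancel_right, norm_neg] at htri
    rw [t1] at htri
    have hBw := mul_le_mul_of_nonneg_left hwd hB0.le
    linarith only [htri, hs, hsmall_d, hBw]
  -- rpow chain: |Pjk z|^(ν/d) ≥ (7/8) B^(ν/d) r^ν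
  have hrdν : ((r:ℝ)^d) ^ (ν/d) = r ^ ν := by
    rw [← Real.rpow_natCast r d, ← Real.rpow_mul hr0.le]
    congr 1
    field_simp
  have hPν : (7/8) * B ^ (ν/d) * r ^ ν ≤ ‖Pjk z‖ ^ (ν/d) := by
    have h78 : ((7/8) * B * r^d : ℝ) ^ (ν/d) ≤ ‖Pjk z‖ ^ (ν/d) :=
      Real.rpow_le_rpow (by positivity) hPabs hνd0
    rw [Real.mul_rpow (by positivity) (by positivity),
      Real.mul_rpow (by norm_num) hB0.le, hrdν] at h78
    have h78' : (7/8:ℝ) ≤ (7/8:ℝ) ^ (ν/d) := by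
      calc (7/8:ℝ) = (7/8:ℝ) ^ (1:ℝ) := (Real.rpow_one _).symm
        _ ≤ (7/8:ℝ) ^ (ν/d) := Real.rpow_le_rpow_of_exponent_ge (by norm_num) (by norm_num) hνd
    exact le_trans
      (mul_le_mul_of_nonneg_right (mul_le_mul_of_nonneg_right h78' hBν0.le) hrνpos.le) h78
  -- real part decomposition
  have hRe : (Pjk z).re = (1+c) * A + (gj.eval z - gk.eval z).re := by
    rw [hPform, Complex.add_re, Complex.re_ofReal_mul, hAdef]
  have hsre : |(gj.eval z - gk.eval z).re| ≤ δ * r ^ ν :=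
    le_trans (le_trans (Complex.abs_re_le_norm _) hs) hsδ
  have hδrν : δ * r ^ ν ≤ (1/8) * B ^ (ν/d) * r ^ ν :=
    mul_le_mul_of_nonneg_right hδB hrνpos.le
  -- sign argument
  have hReP : (7/8) * B ^ (ν/d) * r ^ ν ≤ (Pjk z).re := by
    have habs : (7/8) * B ^ (ν/d) * r ^ ν ≤ |(Pjk z).re| := le_trans hPν hE
    rcases le_abs.mp habs with h | h
    · exact h
    · exfalso
      have h1A : 0 ≤ (1+c) * A := mul_nonneg h1c.le hA0
      have h2A : -(δ * r ^ ν) ≤ (gj.eval z - gk.eval z).re := neg_le_of_abs_le hsre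
      have hX : 0 < B ^ (ν/d) * r ^ ν := mul_pos hBν0 hrνpos
      linarith only [h, hRe, h1A, h2A, hδrν, hX]
  -- lower bound for A
  have hA : (3/4) * (K * r^ν) ≤ A := by
    have h1A : (3/4) * B ^ (ν/d) * r ^ ν ≤ (1+c) * A := by
      have h2A : (gj.eval z - gk.eval z).re ≤ δ * r ^ ν := le_of_abs_le hsre
      linarith only [hRe, hReP, h2A, hδrν]
    rw [hKB, show (3/4:ℝ) * (B ^ (ν/d) / (1+c) * r^ν) = (3/4) * B ^ (ν/d) * r^ν / (1+c)
      from by ring, div_le_iff₀ h1c]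
    linarith only [h1A]
  -- bound on Re gj
  have hgjre : |(gj.eval z).re| ≤ (1/2) * (K * r^ν) := by
    have hc2 := mul_le_mul_of_nonneg_right hδK hrνpos.le
    calc |(gj.eval z).re| ≤ Cj * r^(d-3) := le_trans (Complex.abs_re_le_norm _) hCj'
      _ ≤ (Cj+Ck) * r^(d-3) := mul_le_mul_of_nonneg_right (by linarith only [hCk0]) hrd3nn
      _ ≤ δ * r^ν := hsδ
      _ ≤ (1/2) * (K * r^ν) := by linarith only [hc2]
  have hconst : (1/4:ℝ) * ‖bj‖ * B ^ (ν/d - 1) * r ^ ν = (1/4) * (K * r^ν) := by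
    rw [hK]; ring
  constructor
  · -- first inequality
    have hgoalre : (bj * z^d + Pj z).re = A + (gj.eval z).re := by
      rw [hPj, hAdef, show bj * z^d + (bj * g.eval z + gj.eval z)
        = bj * (z^d + g.eval z) + gj.eval z from by ring, Complex.add_re]
    rw [hgoalre, hconst]
    have hng := neg_le_of_abs_le hgjre
    linarith only [hA, hng]
  · -- second inequality
    rw [hconst]
    have hsplit : r ^ ν = r ^ (ν - α) * r ^ α := by
      rw [← Real.rpow_add hr0]; ring_nf
    have hrα : (0:ℝ) < r ^ α := Real.rpow_pos_of_pos hr0 _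
    have h8 : 8 * r ^ α < K * r ^ (ν - α) * r ^ α := mul_lt_mul_of_pos_right h4 hrα
    calc 2 * r ^ α < (1/4) * (K * r ^ (ν-α) * r ^ α) := by linarith only [h8]
      _ = (1/4) * (K * r ^ ν) := by rw [hsplit]; ring
end

section
/- Let f(z) = Σ_{j=1}^N Q_j(z) exp(b_j z^d + P_j(z)) with d ≥ 3, Q_j nonzero polynomials, deg(P_j) < d, and distinct nonzero b_j. Let ν = d − 5/2, and let E₁ = ∪_{j≠k} P_{j,k}⁻¹({w : |Re w| < |w|^{ν/d}}) where P_{j,k}(z) = (b_j − b_k)z^d + P_j(z) − P_k(z). For every ε > 0 there exists R₀ > 0 such that: for every z ∉ E₁ with |z| ≥ R₀, if m is an index maximizing Re(b_m z^d + P_m(z)), then |f(z)/(Q_m(z) exp(b_m z^d + P_m(z))) − 1| < ε. -/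
/-!
With `A_j = b_j z^d + P_j(z)`, dividing by the dominant term gives
`f z / (Q_m z · exp A_m) - 1 = ∑_{j ≠ m} (Q_j z / Q_m z) · exp (A_j - A_m)`, where
`A_j - A_m = P_{j,m}(z)`. For `z ∉ E₁` and `m` maximal, `Re P_{j,m}(z) ≤ -|P_{j,m}(z)|^α`
(`α = (d - 5/2)/d > 0`), so the `j`-th term is at most `|Q_j z / Q_m z| · exp (-|P_{j,m}(z)|^α)`.
As `P_{j,m}` has degree `d > 0`, the polynomial factor is `O(|P_{j,m}(z)|^{deg Q_j})`, which the
exponential factor beats as `|z| → ∞`.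
-/

open Polynomial Filter Topology Bornology Finset Asymptotics

theorem Real.tendsto_pow_mul_exp_neg_rpow_atTop_nhds_zero (K : ℕ) {α : ℝ} (hα : 0 < α) :
    Tendsto (fun s : ℝ => s ^ K * Real.exp (-s ^ α)) atTop (𝓝 0) := by
  have h := (tendsto_rpow_mul_exp_neg_mul_atTop_nhds_zero (K / α) 1 one_pos).comp
    (tendsto_rpow_atTop hα)
  refine h.congr' ?_
  filter_upwards [eventually_ge_atTop 0] with s hs
  rw [Function.comp_apply, ← Real.rpow_mul hs, mul_div_cancel₀ _ hα.ne', Real.rpow_natCast,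
    neg_one_mul]

theorem Polynomial.tendsto_norm_div_mul_exp_neg_rpow_cobounded {𝕜 : Type*} [NormedField 𝕜]
    (q : 𝕜[X]) {r p : 𝕜[X]} (hr : r ≠ 0) (hp : 0 < p.degree) {α : ℝ} (hα : 0 < α) :
    Tendsto (fun z => ‖q.eval z‖ / ‖r.eval z‖ * Real.exp (-‖p.eval z‖ ^ α))
      (cobounded 𝕜) (𝓝 0) := by
  have hq : q.eval =O[cobounded 𝕜] (p ^ q.natDegree).eval := by
    refine isBigO_cobounded_of_degree_le (degree_le_natDegree.trans ?_)
    rw [degree_eq_natDegree (pow_ne_zero _ (ne_zero_of_degree_gt hp)), natDegree_pow]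
    exact_mod_cast Nat.le_mul_of_pos_right _ (natDegree_pos_iff_degree_pos.mpr hp)
  have hr_inv : (fun z => (r.eval z)⁻¹) =O[cobounded 𝕜] fun _ => (1 : 𝕜)⁻¹ := by
    have h1 : (fun _ => (1 : 𝕜)) =O[cobounded 𝕜] r.eval := by
      simpa using isBigO_cobounded_of_degree_le (P := 1) (Q := r)
        (by simpa using zero_le_degree_iff.mpr hr)
    exact h1.inv_rev (by simp)
  have hdom := (hq.mul hr_inv).norm_norm.mul
    (isBigO_refl (fun z => Real.exp (-‖p.eval z‖ ^ α)) (cobounded 𝕜))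
  refine (hdom.trans_tendsto ?_).congr fun z => ?_
  · refine ((Real.tendsto_pow_mul_exp_neg_rpow_atTop_nhds_zero q.natDegree hα).comp
      (p.tendsto_norm_atTop hp tendsto_norm_cobounded_atTop)).congr fun z => ?_
    simp
  · simp [div_eq_mul_inv]

theorem Complex.norm_mul_exp_div_mul_exp_le (a b : ℂ) {u v : ℂ} {α : ℝ} (hre : u.re ≤ v.re)
    (hsep : ‖u - v‖ ^ α ≤ |(u - v).re|) :
    ‖a * Complex.exp u / (b * Complex.exp v)‖ ≤
      ‖a‖ / ‖b‖ * Real.exp (-‖u - v‖ ^ α) := by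
  rw [mul_div_mul_comm, ← Complex.exp_sub, norm_mul, norm_div, Complex.norm_exp]
  gcongr
  rw [abs_of_nonpos (by rw [Complex.sub_re]; linarith)] at hsep
  linarith

theorem Polynomial.degree_C_mul_X_pow_add {R : Type*} [Semiring R] {a : R} (ha : a ≠ 0) {n : ℕ}
    {p : R[X]} (hp : p.degree < n) : (C a * X ^ n + p).degree = (n : WithBot ℕ) := by
  rw [degree_add_eq_left_of_degree_lt, degree_C_mul_X_pow n ha]
  rwa [degree_C_mul_X_pow n ha]

theorem Finset.sum_div_sub_one {ι K : Type*} [Fintype ι] [DecidableEq ι] [Field K] (u : ι → K)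
    {m : ι} (hm : u m ≠ 0) : (∑ j, u j) / u m - 1 = ∑ j ∈ univ.erase m, u j / u m := by
  rw [← add_sum_erase _ _ (mem_univ m), add_div, div_self hm, sum_div, add_sub_cancel_left]

theorem Filter.exists_pos_forall_le_norm_of_eventually_cobounded {E : Type*}
    [NormedAddCommGroup E] {P : E → Prop} (h : ∀ᶠ z in cobounded E, P z) :
    ∃ R > (0 : ℝ), ∀ z, R ≤ ‖z‖ → P z := by
  obtain ⟨R, -, hR⟩ := hasBasis_cobounded_norm.eventually_iff.mp h
  exact ⟨max R 1, by positivity, fun z hz => hR ((le_max_left _ _).trans hz)⟩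

theorem Polynomial.eventually_sum_norm_div_mul_exp_neg_rpow_lt {𝕜 ι : Type*} [NormedField 𝕜]
    [ProperSpace 𝕜] [Fintype ι] [DecidableEq ι] {Q : ι → 𝕜[X]} (hQ : ∀ j, Q j ≠ 0)
    {p : ι → ι → 𝕜[X]} (hp : ∀ j k, j ≠ k → 0 < (p j k).degree) {α ε : ℝ} (hα : 0 < α)
    (hε : 0 < ε) :
    ∀ᶠ z in cobounded 𝕜, ∀ m, (Q m).eval z ≠ 0 ∧
      ∑ j ∈ univ.erase m,
        ‖(Q j).eval z‖ / ‖(Q m).eval z‖ * Real.exp (-‖(p j m).eval z‖ ^ α) < ε := by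
  refine eventually_all.mpr fun m => ?_
  have hQm : ∀ᶠ z in cobounded 𝕜, (Q m).eval z ≠ 0 :=
    (eventually_cofinite_not_isRoot (hQ m)).filter_mono
      (Metric.cobounded_eq_cocompact (α := 𝕜) ▸ cocompact_le_cofinite)
  have hsum : Tendsto (fun z => ∑ j ∈ univ.erase m,
      ‖(Q j).eval z‖ / ‖(Q m).eval z‖ * Real.exp (-‖(p j m).eval z‖ ^ α))
      (cobounded 𝕜) (𝓝 0) := by
    simpa only [sum_const_zero] using tendsto_finsetSum (univ.erase m) fun j hj =>
      tendsto_norm_div_mul_exp_neg_rpow_cobounded (Q j) (hQ m) (hp j m (ne_of_mem_erase hj)) hα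
  exact hQm.and (hsum.eventually_lt_const hε)

theorem stmt_19_general (d : ℕ) (hd : 3 ≤ d) (N : ℕ)
    (b : Fin N → ℂ) (hbdist : ∀ j k, j ≠ k → b j ≠ b k)
    (Q P : Fin N → Polynomial ℂ) (hQ : ∀ j, Q j ≠ 0) (hdegP : ∀ j, (P j).degree < d)
    (f : ℂ → ℂ)
    (hf : ∀ z, f z = ∑ j : Fin N,
      (Q j).eval z * Complex.exp (b j * z ^ d + (P j).eval z))
    (Pjk : Fin N → Fin N → ℂ → ℂ)
    (hPjk : ∀ j k z, Pjk j k z = (b j - b k) * z ^ d + ((P j).eval z - (P k).eval z)) :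
    ∀ ε > (0:ℝ), ∃ R₀ > (0:ℝ), ∀ z : ℂ, R₀ ≤ ‖z‖ →
      (∀ j k, j ≠ k →
        ‖Pjk j k z‖ ^ (((d : ℝ) - 5/2) / d) ≤ |(Pjk j k z).re|) →
      ∀ m : Fin N,
        (∀ j, (b j * z ^ d + (P j).eval z).re ≤ (b m * z ^ d + (P m).eval z).re) →
        ‖f z / ((Q m).eval z * Complex.exp (b m * z ^ d + (P m).eval z)) - 1‖
          < ε := by
  intro ε hε
  set α : ℝ := ((d : ℝ) - 5/2) / d
  have hα : 0 < α := by
    have hd' : (3 : ℝ) ≤ d := by exact_mod_cast hd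
    exact div_pos (by linarith) (by positivity)
  have hPjk_eval : ∀ j k z, Pjk j k z = (C (b j - b k) * X ^ d + (P j - P k)).eval z := by
    simp [hPjk]
  have hPjk_degree : ∀ j k, j ≠ k → 0 < (C (b j - b k) * X ^ d + (P j - P k)).degree := by
    intro j k hjk
    rw [degree_C_mul_X_pow_add (sub_ne_zero.mpr (hbdist j k hjk))
      ((degree_sub_le _ _).trans_lt (max_lt (hdegP j) (hdegP k)))]
    exact_mod_cast (by omega : 0 < d)
  obtain ⟨R₀, hR₀, hR⟩ := exists_pos_forall_le_norm_of_eventually_cobounded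
    (eventually_sum_norm_div_mul_exp_neg_rpow_lt hQ hPjk_degree hα hε)
  refine ⟨R₀, hR₀, fun z hz hsep m hmax => ?_⟩
  obtain ⟨hQm, hlt⟩ := hR z hz m
  rw [hf z, sum_div_sub_one (fun j => (Q j).eval z * Complex.exp (b j * z ^ d + (P j).eval z))
    (mul_ne_zero hQm (Complex.exp_ne_zero _))]
  refine (norm_sum_le _ _).trans_lt ((sum_le_sum fun j hj => ?_).trans_lt hlt)
  have hw : b j * z ^ d + (P j).eval z - (b m * z ^ d + (P m).eval z) = Pjk j m z := by
    rw [hPjk]; ring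
  rw [← hPjk_eval, ← hw]
  exact Complex.norm_mul_exp_div_mul_exp_le _ _ (hmax j) (hw ▸ hsep j m (ne_of_mem_erase hj))

/-- Approximation of f by its dominant term: for z outside E₁ with |z| large,
if m maximizes Re(b_m z^d + P_m(z)), then f(z)/(Q_m(z)exp(b_m z^d + P_m(z)))
is within ε of 1. -/
theorem stmt_19 (d : ℕ) (hd : 3 ≤ d) (N : ℕ) (hN : 1 ≤ N)
    (b : Fin N → ℂ) (hb0 : ∀ j, b j ≠ 0) (hbdist : ∀ j k, j ≠ k → b j ≠ b k)
    (Q P : Fin N → Polynomial ℂ) (hQ : ∀ j, Q j ≠ 0) (hdegP : ∀ j, (P j).degree < d)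
    (f : ℂ → ℂ)
    (hf : ∀ z, f z = ∑ j : Fin N,
      (Q j).eval z * Complex.exp (b j * z ^ d + (P j).eval z))
    (Pjk : Fin N → Fin N → ℂ → ℂ)
    (hPjk : ∀ j k z, Pjk j k z = (b j - b k) * z ^ d + ((P j).eval z - (P k).eval z)) :
    ∀ ε > (0:ℝ), ∃ R₀ > (0:ℝ), ∀ z : ℂ, R₀ ≤ ‖z‖ →
      (∀ j k, j ≠ k →
        ‖Pjk j k z‖ ^ (((d : ℝ) - 5/2) / d) ≤ |(Pjk j k z).re|) →
      ∀ m : Fin N,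
        (∀ j, (b j * z ^ d + (P j).eval z).re ≤ (b m * z ^ d + (P m).eval z).re) →
        ‖f z / ((Q m).eval z * Complex.exp (b m * z ^ d + (P m).eval z)) - 1‖
          < ε :=
  stmt_19_general d hd N b hbdist Q P hQ hdegP f hf Pjk hPjk
end
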